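/- For n ≥ 1 not a power of 2, the degree of a(n; z) is at least n/3. -/

import Mathlib

/-!
A polynomial with positive leading coefficient stays so under `expand 2` and multiplication by
`X`, and the sum of two such polynomials has positive leading coefficient and degree the maximum
of the two degrees. Hence `deg a(2m) = 2 deg a(m)` and
`deg a(2m+1) = max (2 deg a(m) + 1) (2 deg a(m+1))`. By strong induction `n ≤ 3 deg a(n)` for `n`
not a power of two: for `n = 2m+1`, at least one of `m`, `m+1` is not a power of two unless
`n = 3`, and either branch of the maximum gains the required factor.
-/

open Polynomial

/-- The Stern polynomials: a(0;z)=0, a(1;z)=1, a(2n;z)=a(n;z^2),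
    a(2n+1;z)=z*a(n;z^2)+a(n+1;z^2). -/
noncomputable def stern : ℕ → Polynomial ℤ
  | 0 => 0
  | 1 => 1
  | (n+2) =>
    if _h : n % 2 = 0 then (stern (n/2+1)).comp (X^2)
    else X * (stern (n/2+1)).comp (X^2) + (stern (n/2+2)).comp (X^2)
  decreasing_by all_goals omega

namespace Polynomial

variable {R : Type*} [Semiring R] [PartialOrder R] [IsStrictOrderedRing R] {p q : R[X]}

lemma leadingCoeff_add_pos (hp : 0 < p.leadingCoeff) (hq : 0 < q.leadingCoeff) :
    0 < (p + q).leadingCoeff := by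
  have hp0 : p ≠ 0 := leadingCoeff_ne_zero.mp hp.ne'
  have hq0 : q ≠ 0 := leadingCoeff_ne_zero.mp hq.ne'
  rcases lt_trichotomy p.natDegree q.natDegree with hlt | heq | hgt
  · rwa [leadingCoeff_add_of_degree_lt (degree_lt_degree hlt)]
  · rw [leadingCoeff_add_of_degree_eq (by rw [degree_eq_natDegree hp0, degree_eq_natDegree hq0,
      heq]) (add_pos hp hq).ne']
    exact add_pos hp hq
  · rwa [leadingCoeff_add_of_degree_lt' (degree_lt_degree hgt)]

lemma natDegree_add_of_leadingCoeff_pos (hp : 0 < p.leadingCoeff) (hq : 0 < q.leadingCoeff) :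
    (p + q).natDegree = max p.natDegree q.natDegree := by
  have h := degree_add_eq_of_leadingCoeff_add_ne_zero (add_pos hp hq).ne'
  rw [degree_eq_natDegree (leadingCoeff_ne_zero.mp (leadingCoeff_add_pos hp hq).ne'),
    degree_eq_natDegree (leadingCoeff_ne_zero.mp hp.ne'),
    degree_eq_natDegree (leadingCoeff_ne_zero.mp hq.ne')] at h
  exact WithBot.coe_injective (h.trans (WithBot.coe_max _ _).symm)

end Polynomial

lemma Nat.eq_one_of_isPowerOfTwo_of_isPowerOfTwo_succ {m : ℕ} (hm : m.isPowerOfTwo)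
    (hm1 : (m + 1).isPowerOfTwo) : m = 1 := by
  obtain ⟨i, rfl⟩ := hm
  obtain ⟨j, hj⟩ := hm1
  have hj0 : j ≠ 0 := by
    rintro rfl
    simp at hj
  have hi0 : i = 0 := by
    by_contra hi0
    have h2i : Even (2 ^ i) := (Nat.even_pow' hi0).mpr even_two
    have h2j : Even (2 ^ j) := (Nat.even_pow' hj0).mpr even_two
    rw [← hj] at h2j
    exact Nat.not_even_iff_odd.mpr h2i.add_one h2j
  simp [hi0]

lemma stern_two_mul (n : ℕ) : stern (2 * n) = expand ℤ 2 (stern n) := by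
  rcases n with _ | n
  · simp [stern]
  · rw [show 2 * (n + 1) = 2 * n + 2 by ring, stern]
    simp [expand_eq_comp_X_pow]

lemma stern_two_mul_add_one (n : ℕ) :
    stern (2 * n + 1) = X * expand ℤ 2 (stern n) + expand ℤ 2 (stern (n + 1)) := by
  rcases n with _ | n
  · simp [stern]
  · rw [show 2 * (n + 1) + 1 = (2 * n + 1) + 2 by ring, stern]
    simp [expand_eq_comp_X_pow, show (2 * n + 1) / 2 = n by omega]

lemma stern_leadingCoeff_pos {n : ℕ} (hn : 0 < n) : 0 < (stern n).leadingCoeff := by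
  induction n using Nat.strong_induction_on with
  | _ n ih =>
    obtain ⟨m, rfl | rfl⟩ := Nat.even_or_odd' n
    · rw [stern_two_mul, leadingCoeff_expand two_pos]
      exact ih m (by omega) (by omega)
    · rcases Nat.eq_zero_or_pos m with rfl | hm
      · simp [stern]
      rw [stern_two_mul_add_one]
      refine leadingCoeff_add_pos ?_ ?_
      · rw [X_mul, leadingCoeff_mul_X, leadingCoeff_expand two_pos]
        exact ih m (by omega) hm
      · rw [leadingCoeff_expand two_pos]
        exact ih (m + 1) (by omega) (by omega)

lemma natDegree_stern_two_mul (n : ℕ) :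
    (stern (2 * n)).natDegree = 2 * (stern n).natDegree := by
  rw [stern_two_mul, natDegree_expand, mul_comm]

lemma natDegree_stern_two_mul_add_one {n : ℕ} (hn : 0 < n) :
    (stern (2 * n + 1)).natDegree =
      max (2 * (stern n).natDegree + 1) (2 * (stern (n + 1)).natDegree) := by
  have hlc := stern_leadingCoeff_pos hn
  rw [stern_two_mul_add_one, natDegree_add_of_leadingCoeff_pos
    (by rwa [X_mul, leadingCoeff_mul_X, leadingCoeff_expand two_pos])
    (by rw [leadingCoeff_expand two_pos]; exact stern_leadingCoeff_pos (by omega)),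
    natDegree_X_mul (expand_ne_zero two_pos |>.mpr (leadingCoeff_ne_zero.mp hlc.ne')),
    natDegree_expand, natDegree_expand, mul_comm (stern n).natDegree,
    mul_comm (stern (n + 1)).natDegree]

lemma le_three_mul_natDegree_stern {n : ℕ} (hn : 0 < n) (h : ¬ n.isPowerOfTwo) :
    n ≤ 3 * (stern n).natDegree := by
  induction n using Nat.strong_induction_on with
  | _ n ih =>
    obtain ⟨m, rfl | rfl⟩ := Nat.even_or_odd' n
    · have hm : ¬ m.isPowerOfTwo := fun hm ↦ h (by
        simpa [mul_comm] using Nat.isPowerOfTwo_mul_two_of_isPowerOfTwo hm)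
      have bound_m := ih m (by omega) (by omega) hm
      rw [natDegree_stern_two_mul]
      omega
    · rcases Nat.eq_zero_or_pos m with rfl | hm0
      · exact absurd Nat.isPowerOfTwo_one h
      rw [natDegree_stern_two_mul_add_one hm0]
      by_cases hm : m.isPowerOfTwo
      · by_cases hm1 : (m + 1).isPowerOfTwo
        · have m_eq_one := Nat.eq_one_of_isPowerOfTwo_of_isPowerOfTwo_succ hm hm1
          omega
        · have bound_succ := ih (m + 1) (by omega) (by omega) hm1
          omega
      · have bound_m := ih m (by omega) hm0 hm
        omega

theorem stern_natDegree_ge (n : ℕ) (hn : 1 ≤ n)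
    (h : ¬ ∃ k : ℕ, n = 2 ^ k) :
    (n : ℝ) / 3 ≤ (stern n).natDegree := by
  have key : n ≤ 3 * (stern n).natDegree := le_three_mul_natDegree_stern hn h
  rw [div_le_iff₀ three_pos, mul_comm]
  exact_mod_cast key
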